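/- (Upper bound direction of the query formula) Let v1, v2 be vertices with P v1 = i and P v2 = j. Then for every b1 ∈ B(C_i) and every b2 ∈ B(C_j), dist_G(v1,v2) ≤ dist_{C_i}(v1,b1) + dist_BG(b1,b2) + dist_{C_j}(b2,v2). -/

import Mathlib

open scoped ENNReal

namespace SPQ

variable {V : Type*} {ι : Type*}

/-- The length of a walk: the sum of the weights `w` over its consecutive edges. -/
noncomputable def wlen (w : V → V → ℝ≥0∞) {G : SimpleGraph V} {u v : V} (p : G.Walk u v) : ℝ≥0∞ :=
  (p.darts.map fun d => w d.toProd.1 d.toProd.2).sum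

/-- The shortest-path distance: infimum of lengths of all walks (⊤ if none exists). -/
noncomputable def gdist (G : SimpleGraph V) (w : V → V → ℝ≥0∞) (u v : V) : ℝ≥0∞ :=
  ⨅ p : G.Walk u v, wlen w p

/-- The component `C_i`: the subgraph of `G` induced on `P ⁻¹ {i}`
(as a graph on `V`: edges of `G` with both endpoints mapped to `i` by `P`). -/
def comp (G : SimpleGraph V) (P : V → ι) (i : ι) : SimpleGraph V where
  Adj u v := G.Adj u v ∧ P u = i ∧ P v = i
  symm := ⟨fun _ _ h => ⟨h.1.symm, h.2.2, h.2.1⟩⟩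
  loopless := ⟨fun u h => G.irrefl h.1⟩

/-- The boundary `B(C_i)`: vertices of component `i` having a `G`-neighbor
in a different component. -/
def bdry (G : SimpleGraph V) (P : V → ι) (i : ι) : Set V :=
  {v | P v = i ∧ ∃ u, G.Adj v u ∧ P u ≠ i}

/-- The set `B` of all boundary vertices. -/
def bdryAll (G : SimpleGraph V) (P : V → ι) : Set V :=
  ⋃ i, bdry G P i

/-- The boundary graph `BG`: distinct boundary vertices `b1, b2` are adjacent
iff `P b1 = P b2` or `G.Adj b1 b2`. -/
def BGraph (G : SimpleGraph V) (P : V → ι) : SimpleGraph V where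
  Adj b1 b2 := b1 ≠ b2 ∧ b1 ∈ bdryAll G P ∧ b2 ∈ bdryAll G P ∧ (P b1 = P b2 ∨ G.Adj b1 b2)
  symm := by
    refine ⟨?_⟩
    intro u v h
    refine ⟨h.1.symm, h.2.2.1, h.2.1, ?_⟩
    rcases h.2.2.2 with h' | h'
    · exact Or.inl h'.symm
    · exact Or.inr h'.symm
  loopless := ⟨fun u h => h.1 rfl⟩

open Classical in
/-- The edge weight of the boundary graph:
`wt b1 b2 = dist_{C_{P b1}}(b1, b2)` if `P b1 = P b2`, and `w b1 b2` otherwise. -/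
noncomputable def wt (G : SimpleGraph V) (P : V → ι) (w : V → V → ℝ≥0∞) (b1 b2 : V) : ℝ≥0∞ :=
  if P b1 = P b2 then gdist (comp G P (P b1)) w b1 b2 else w b1 b2

/-! Every edge of the boundary graph weighs at least the `G`-distance between its endpoints (an
intra-component distance is a distance in a subgraph of `G`, any other edge is an edge of `G`), so
by the triangle inequality `dist_G ≤ dist_BG`. Since `C_i ≤ G`, also `dist_G ≤ dist_{C_i}`, and
the claim is the triangle inequality for `dist_G` through `b1` and `b2`. -/

section Distance

open SimpleGraph

variable {G H : SimpleGraph V} {w w' : V → V → ℝ≥0∞}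

@[simp]
lemma wlen_nil {u : V} : wlen w (Walk.nil : G.Walk u u) = 0 := by
  simp [wlen]

@[simp]
lemma wlen_cons {u x v : V} (h : G.Adj u x) (p : G.Walk x v) :
    wlen w (Walk.cons h p) = w u x + wlen w p := by
  simp [wlen]

lemma wlen_append {u x v : V} (p : G.Walk u x) (q : G.Walk x v) :
    wlen w (p.append q) = wlen w p + wlen w q := by
  simp [wlen, Walk.darts_append]

lemma wlen_mapLe (hle : H ≤ G) {u v : V} (p : H.Walk u v) :
    wlen w (p.mapLe hle) = wlen w p := by
  simp [wlen, Walk.mapLe, Walk.darts_map, Function.comp_def]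

lemma gdist_le_wlen {u v : V} (p : G.Walk u v) : gdist G w u v ≤ wlen w p :=
  iInf_le _ p

lemma gdist_le_of_adj {u v : V} (h : G.Adj u v) : gdist G w u v ≤ w u v := by
  simpa using gdist_le_wlen (w := w) (Walk.cons h Walk.nil)

lemma gdist_anti (hle : H ≤ G) (u v : V) : gdist G w u v ≤ gdist H w u v :=
  le_iInf fun p => wlen_mapLe hle p ▸ gdist_le_wlen _

lemma gdist_triangle (u x v : V) : gdist G w u v ≤ gdist G w u x + gdist G w x v := by
  calc gdist G w u v ≤ ⨅ (p : G.Walk u x) (q : G.Walk x v), wlen w p + wlen w q :=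
        le_iInf₂ fun p q => wlen_append p q ▸ gdist_le_wlen _
    _ = gdist G w u x + gdist G w x v := by
        rw [gdist, gdist, ENNReal.iInf_add]
        exact iInf_congr fun p => (ENNReal.add_iInf).symm

lemma gdist_le_gdist_of_forall_adj (hw : ∀ a b, H.Adj a b → gdist G w a b ≤ w' a b) (u v : V) :
    gdist G w u v ≤ gdist H w' u v := by
  refine le_iInf fun p => ?_
  induction p with
  | nil => simpa using gdist_le_wlen (w := w) (Walk.nil : G.Walk _ _)
  | @cons a b c h p ih =>
    calc gdist G w a c ≤ gdist G w a b + gdist G w b c := gdist_triangle a b c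
      _ ≤ w' a b + wlen w' p := add_le_add (hw a b h) ih
      _ = wlen w' (Walk.cons h p) := (wlen_cons h p).symm

end Distance

lemma comp_le (G : SimpleGraph V) (P : V → ι) (i : ι) : comp G P i ≤ G :=
  fun _ _ h => h.1

lemma gdist_le_wt (G : SimpleGraph V) (P : V → ι) (w : V → V → ℝ≥0∞) {a b : V}
    (h : (BGraph G P).Adj a b) : gdist G w a b ≤ wt G P w a b := by
  unfold wt
  split_ifs with hP
  · exact gdist_anti (comp_le G P _) a b
  · exact gdist_le_of_adj (h.2.2.2.resolve_left hP)

lemma gdist_le_gdist_BGraph (G : SimpleGraph V) (P : V → ι) (w : V → V → ℝ≥0∞) (u v : V) :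
    gdist G w u v ≤ gdist (BGraph G P) (wt G P w) u v :=
  gdist_le_gdist_of_forall_adj (fun _ _ => gdist_le_wt G P w) u v

theorem stmt11_general {V : Type*} {ι : Type*}
    (G : SimpleGraph V) (w : V → V → ℝ≥0∞)
    (P : V → ι) (i j : ι) (v1 v2 : V) :
    ∀ b1 ∈ bdry G P i, ∀ b2 ∈ bdry G P j,
      gdist G w v1 v2 ≤
        gdist (comp G P i) w v1 b1 + gdist (BGraph G P) (wt G P w) b1 b2 +
          gdist (comp G P j) w b2 v2 := by
  intro b1 _ b2 _
  calc gdist G w v1 v2 ≤ gdist G w v1 b1 + gdist G w b1 b2 + gdist G w b2 v2 :=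
        (gdist_triangle v1 b2 v2).trans (add_le_add_left (gdist_triangle v1 b1 b2) _)
    _ ≤ _ := by
        gcongr
        · exact gdist_anti (comp_le G P i) v1 b1
        · exact gdist_le_gdist_BGraph G P w b1 b2
        · exact gdist_anti (comp_le G P j) b2 v2

/-- Upper bound direction of the query formula: Let `v1, v2` be vertices
with `P v1 = i` and `P v2 = j`. Then for every `b1 ∈ B(C_i)` and every `b2 ∈ B(C_j)`,
`dist_G(v1,v2) ≤ dist_{C_i}(v1,b1) + dist_BG(b1,b2) + dist_{C_j}(b2,v2)`. -/
theorem stmt11 {V : Type*} {ι : Type*} [Fintype V] [Fintype ι]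
    (G : SimpleGraph V) (w : V → V → ℝ≥0∞)
    (hsymm : ∀ u v, w u v = w v u) (hfin : ∀ u v, G.Adj u v → w u v < ⊤)
    (P : V → ι) (i j : ι) (v1 v2 : V) (h1 : P v1 = i) (h2 : P v2 = j) :
    ∀ b1 ∈ bdry G P i, ∀ b2 ∈ bdry G P j,
      gdist G w v1 v2 ≤
        gdist (comp G P i) w v1 b1 + gdist (BGraph G P) (wt G P w) b1 b2 +
          gdist (comp G P j) w b2 v2 :=
  stmt11_general G w P i j v1 v2

end SPQ
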